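/- Let n ≥ 1 and let X ⊆ {0,1}^n be a finite subset of binary words (ordered 0 < 1) stable under the cyclic shift c. Suppose there is a non-constant word w ∈ X whose C-orbit is free (its n cyclic shifts are pairwise distinct) and such that every non-constant word of X lies in the C-orbit of w. Then (X, X^inv(t), C) exhibits the cyclic sieving phenomenon if and only if gcd(n, wt(w)) = 1. -/

import Mathlib

/-- The (leftward) cyclic shift on words of length `n`:
`c(w₁,…,wₙ) = (w₂,…,wₙ,w₁)`. -/
def cshift {A : Type*} {n : ℕ} (w : Fin n → A) : Fin n → A :=
  fun i => w ⟨((i : ℕ) + 1) % n, Nat.mod_lt _ i.pos⟩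

/-- The major index of a word: `maj w = Σ_{1 ≤ i ≤ n-1, w_i > w_{i+1}} i`
(here positions are 0-indexed, so position `i : Fin n` is the `(i+1)`-st letter). -/
def majIdx {A : Type*} [LinearOrder A] {n : ℕ} (w : Fin n → A) : ℕ :=
  ∑ i : Fin n,
    if h : (i : ℕ) + 1 < n then (if w ⟨(i : ℕ) + 1, h⟩ < w i then (i : ℕ) + 1 else 0) else 0

/-- The number of cyclic descents of a word, `cdes w = #{i : w_i > w_{i+1}}`
with indices read cyclically (`w_{n+1} := w_1`). -/
def cdes {A : Type*} [LinearOrder A] {n : ℕ} (w : Fin n → A) : ℕ :=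
  (Finset.univ.filter fun i : Fin n =>
    w ⟨((i : ℕ) + 1) % n, Nat.mod_lt _ i.pos⟩ < w i).card

/-- The inversion number of a word: `inv w = #{(i,j) : i < j, w_i > w_j}`. -/
def invNum {A : Type*} [LinearOrder A] {n : ℕ} (w : Fin n → A) : ℕ :=
  (Finset.univ.filter fun p : Fin n × Fin n => p.1 < p.2 ∧ w p.2 < w p.1).card

/-- The Hamming weight of a binary word: the number of ones. -/
def wt {n : ℕ} (w : Fin n → Bool) : ℕ :=
  (Finset.univ.filter fun i => w i = true).card

/-- The triple `(X, Σ_{x ∈ X} t^{stat x}, C)` exhibits the cyclic sieving phenomenon,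
where `C` is the cyclic group of order `n` generated by the cyclic shift `c` acting on `X`:
for every `d`, the number of fixed points of `c^d` on `X` equals the evaluation of
`Σ_{x ∈ X} t^{stat x}` at `t = ζ^d`, with `ζ = exp(2πi/n)`. -/
def exhibitsCSP {A : Type*} [DecidableEq A] {n : ℕ} (X : Finset (Fin n → A))
    (stat : (Fin n → A) → ℕ) : Prop :=
  ∀ d : ℕ,
    ((X.filter fun v => cshift^[d] v = v).card : ℂ) =
      ∑ v ∈ X, Complex.exp (2 * (Real.pi : ℂ) * Complex.I / n) ^ (d * stat v)

/-! Moving the first letter of a binary word of length `n` to the end changes its inversion number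
by `wt w` modulo `n`: a leading `0` gains one inversion for each `1`, a leading `1` loses one for
each of the `n - wt w` zeros. Along the free orbit `inv (c^r w) ≡ inv w + r · wt w [MOD n]`, so at
`t = ζ^d` the orbit contributes the geometric sum `ζ^(d · inv w) · Σ_r ζ^(d · wt w · r)`, which is
`n · ζ^(d · inv w)` or `0` according as `n ∣ d · wt w`, while it has `n` or `0` points fixed by
`c^d` according as `n ∣ d`. Constant words are fixed by every shift and have no inversions, so they
count equally on both sides. Hence the CSP holds iff `n ∣ d ↔ n ∣ d · wt w` for all `d`, i.e. iff
`gcd(n, wt w) = 1`; for `g = gcd(n, wt w) > 1` the shift `d = n / g` is a counterexample. -/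

open Finset

section Words

variable {A : Type*}

lemma cshift_iterate_apply {n : ℕ} (w : Fin n → A) (r : ℕ) (i : Fin n) :
    cshift^[r] w i = w ⟨((i : ℕ) + r) % n, Nat.mod_lt _ i.pos⟩ := by
  induction r generalizing w with
  | zero => simp [Nat.mod_eq_of_lt i.isLt]
  | succ r ih =>
    rw [Function.iterate_succ_apply, ih, cshift]
    congr 2
    rw [Fin.val_mk, Nat.mod_add_mod, add_assoc]

lemma cshift_iterate_length {n : ℕ} (w : Fin n → A) : cshift^[n] w = w := by
  funext i
  rw [cshift_iterate_apply]
  simp [Nat.mod_eq_of_lt i.isLt]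

lemma cshift_eq_self_of_const {n : ℕ} {w : Fin n → A} (hw : ∀ i j, w i = w j) :
    cshift w = w :=
  funext fun _ => hw _ _

lemma cshift_cons {m : ℕ} (a : A) (u : Fin m → A) :
    cshift (Fin.cons a u : Fin (m + 1) → A) = Fin.snoc u a := by
  funext i
  induction i using Fin.lastCases with
  | last => simp [cshift]
  | cast j =>
    rw [Fin.snoc_castSucc, cshift]
    convert Fin.cons_succ (α := fun _ => A) a u j using 2
    ext
    simp [Nat.mod_eq_of_lt (Nat.succ_lt_succ j.isLt)]

variable [LinearOrder A]

lemma invNum_eq_sum {n : ℕ} (w : Fin n → A) :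
    invNum w = ∑ i, ∑ j, if i < j ∧ w j < w i then 1 else 0 := by
  rw [invNum, card_filter, Fintype.sum_prod_type]

lemma invNum_cons {m : ℕ} (a : A) (u : Fin m → A) :
    invNum (Fin.cons a u : Fin (m + 1) → A) = #{j | u j < a} + invNum u := by
  rw [invNum_eq_sum, invNum_eq_sum, card_filter]
  simp only [Fin.sum_univ_succ, Fin.cons_zero, Fin.cons_succ, Fin.succ_lt_succ_iff, Fin.succ_pos,
    true_and, false_and, if_false, Fin.not_lt_zero, zero_add]

lemma invNum_snoc {m : ℕ} (u : Fin m → A) (a : A) :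
    invNum (Fin.snoc u a : Fin (m + 1) → A) = invNum u + #{i | a < u i} := by
  have h_last : ∀ i : Fin m, ¬ Fin.last m < i.castSucc := fun i => not_lt.2 (Fin.le_last _)
  rw [invNum_eq_sum, invNum_eq_sum, card_filter]
  simp only [Fin.sum_univ_castSucc, Fin.snoc_castSucc, Fin.snoc_last, Fin.castSucc_lt_castSucc_iff,
    Fin.castSucc_lt_last, true_and, lt_self_iff_false, false_and, if_false, h_last,
    sum_const_zero, add_zero, sum_add_distrib]

lemma invNum_eq_zero_of_const {n : ℕ} {v : Fin n → A} (hv : ∀ i j, v i = v j) : invNum v = 0 := by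
  rw [invNum, card_eq_zero, filter_eq_empty_iff]
  rintro ⟨i, j⟩ - ⟨-, h⟩
  exact (hv i j ▸ h).false

lemma invNum_cshift_cons_add {m : ℕ} (a : A) (u : Fin m → A) :
    invNum (cshift (Fin.cons a u : Fin (m + 1) → A)) + #{j | u j < a} =
      invNum (Fin.cons a u : Fin (m + 1) → A) + #{j | a < u j} := by
  rw [cshift_cons, invNum_snoc, invNum_cons]
  omega

end Words

section Binary

lemma wt_cons {m : ℕ} (a : Bool) (u : Fin m → Bool) :
    wt (Fin.cons a u : Fin (m + 1) → Bool) = a.toNat + wt u := by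
  rw [wt, Fin.card_filter_univ_succ']
  cases a <;> simp [wt]

lemma wt_snoc {m : ℕ} (u : Fin m → Bool) (a : Bool) :
    wt (Fin.snoc u a : Fin (m + 1) → Bool) = wt u + a.toNat := by
  rw [wt, wt, card_filter, card_filter, Fin.sum_univ_castSucc]
  cases a <;> simp

lemma wt_cshift {n : ℕ} (w : Fin n → Bool) : wt (cshift w) = wt w := by
  cases n with
  | zero => rfl
  | succ m =>
    rw [← Fin.cons_self_tail w, cshift_cons, wt_snoc, wt_cons, add_comm]

lemma wt_cshift_iterate {n : ℕ} (w : Fin n → Bool) (r : ℕ) : wt (cshift^[r] w) = wt w := by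
  induction r with
  | zero => rfl
  | succ r ih => rw [Function.iterate_succ_apply', wt_cshift, ih]

lemma card_filter_lt_true {m : ℕ} (u : Fin m → Bool) : #{j | u j < true} = m - wt u := by
  have h := card_filter_add_card_filter_not (s := (univ : Finset (Fin m))) (fun j => u j = true)
  simp only [card_univ, Fintype.card_fin, Bool.not_eq_true] at h
  simp only [Bool.lt_iff, and_true, wt]
  omega

lemma card_filter_false_lt {m : ℕ} (u : Fin m → Bool) : #{j | false < u j} = wt u := by
  simp [Bool.lt_iff, wt]

lemma card_filter_lt_false {m : ℕ} (u : Fin m → Bool) : #{j | u j < false} = 0 := by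
  simp [Bool.lt_iff]

lemma card_filter_true_lt {m : ℕ} (u : Fin m → Bool) : #{j | true < u j} = 0 := by
  simp [Bool.lt_iff]

lemma invNum_cshift_modEq {n : ℕ} (w : Fin n → Bool) :
    invNum (cshift w) ≡ invNum w + wt w [MOD n] := by
  cases n with
  | zero => rfl
  | succ m =>
    obtain ⟨a, u, rfl⟩ : ∃ a u, w = Fin.cons a u := ⟨w 0, Fin.tail w, (Fin.cons_self_tail w).symm⟩
    have h := invNum_cshift_cons_add a u
    rw [wt_cons]
    cases a with
    | false =>
      rw [card_filter_lt_false, card_filter_false_lt, add_zero] at h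
      rw [h, Bool.toNat_false, zero_add]
    | true =>
      have h_le : wt u ≤ m := (card_filter_le _ _).trans_eq (card_fin m)
      rw [card_filter_lt_true, card_filter_true_lt, add_zero] at h
      have h_inv : invNum (cshift (Fin.cons true u)) + (m + 1) =
          invNum (Fin.cons true u : Fin (m + 1) → Bool) + (true.toNat + wt u) := by
        simp only [Bool.toNat_true]
        omega
      exact h_inv ▸ Nat.add_modEq_right.symm

lemma invNum_cshift_iterate_modEq {n : ℕ} (w : Fin n → Bool) (r : ℕ) :
    invNum (cshift^[r] w) ≡ invNum w + r * wt w [MOD n] := by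
  induction r with
  | zero => simp [Nat.ModEq.refl]
  | succ r ih =>
    rw [Function.iterate_succ_apply']
    calc _ ≡ invNum (cshift^[r] w) + wt (cshift^[r] w) [MOD n] := invNum_cshift_modEq _
      _ ≡ invNum w + r * wt w + wt w [MOD n] := by rw [wt_cshift_iterate]; exact ih.add_right _
      _ = invNum w + (r + 1) * wt w := by ring

end Binary

section RootsOfUnity

variable {R : Type*} [CommRing R] [IsDomain R] {ζ : R} {n : ℕ}

lemma IsPrimitiveRoot.geom_sum_pow_eq (hζ : IsPrimitiveRoot ζ n) (a : ℕ) :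
    ∑ r ∈ range n, (ζ ^ a) ^ r = if n ∣ a then (n : R) else 0 := by
  split_ifs with h
  · simp [(hζ.pow_eq_one_iff_dvd a).2 h]
  · have h_ne : ζ ^ a - 1 ≠ 0 := sub_ne_zero.2 fun h' => h ((hζ.pow_eq_one_iff_dvd a).1 h')
    have h_geom := mul_geom_sum (ζ ^ a) n
    rw [← pow_mul, mul_comm a n, pow_mul, hζ.pow_eq_one, one_pow, sub_self] at h_geom
    exact (mul_eq_zero.1 h_geom).resolve_left h_ne

lemma IsPrimitiveRoot.sum_range_pow_invNum_cshift_iterate (hζ : IsPrimitiveRoot ζ n)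
    (w : Fin n → Bool) (d : ℕ) :
    ∑ r ∈ range n, ζ ^ (d * invNum (cshift^[r] w)) =
      ζ ^ (d * invNum w) * if n ∣ d * wt w then (n : R) else 0 := by
  rw [← hζ.geom_sum_pow_eq, mul_sum]
  refine sum_congr rfl fun r _ => ?_
  rw [← pow_mul, ← pow_add]
  refine pow_eq_pow_of_modEq ?_ hζ.pow_eq_one
  calc d * invNum (cshift^[r] w) ≡ d * (invNum w + r * wt w) [MOD n] :=
        (invNum_cshift_iterate_modEq w r).mul_left d
    _ = d * invNum w + d * wt w * r := by ring

variable [CharZero R]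

lemma IsPrimitiveRoot.forall_ite_dvd_eq_iff_coprime (hζ : IsPrimitiveRoot ζ n) (hn : 0 < n)
    (a k : ℕ) :
    (∀ d : ℕ, (if n ∣ d then (n : R) else 0) = ζ ^ (d * a) * if n ∣ d * k then (n : R) else 0) ↔
      n.Coprime k := by
  constructor
  · intro h
    by_contra h_gcd
    set g := n.gcd k
    have hg : 2 ≤ g := by have := Nat.gcd_pos_of_pos_left k hn; omega
    have h_pos : 0 < n / g := Nat.div_pos (Nat.gcd_le_left k hn) (by omega)
    have h_lt : n / g < n := Nat.div_lt_self hn (by omega)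
    have h_not_dvd : ¬ n ∣ n / g := fun h_dvd => (Nat.le_of_dvd h_pos h_dvd).not_gt h_lt
    have h_dvd : n ∣ n / g * k := by
      rw [Nat.div_mul_right_comm (Nat.gcd_dvd_left n k),
        Nat.mul_div_assoc n (Nat.gcd_dvd_right n k)]
      exact dvd_mul_right n _
    have h_eq := h (n / g)
    rw [if_neg h_not_dvd, if_pos h_dvd] at h_eq
    exact mul_ne_zero (pow_ne_zero _ (hζ.ne_zero hn.ne')) (Nat.cast_ne_zero.2 hn.ne') h_eq.symm
  · intro h_cop d
    by_cases hd : n ∣ d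
    · rw [if_pos hd, if_pos (hd.mul_right k), (hζ.pow_eq_one_iff_dvd _).2 (hd.mul_right a), one_mul]
    · rw [if_neg hd, if_neg fun h' => hd (h_cop.dvd_of_dvd_mul_right h'), mul_zero]

end RootsOfUnity

open Function

section Dynamics

variable {α : Type*} {f : α → α} {x : α}

lemma Function.minimalPeriod_eq_of_injective_iterate {n : ℕ} (hn : 0 < n)
    (hx : IsPeriodicPt f n x)
    (hinj : ∀ i j : Fin n, f^[(i : ℕ)] x = f^[(j : ℕ)] x → i = j) :
    minimalPeriod f x = n := by
  refine (hx.minimalPeriod_le hn).antisymm (not_lt.1 fun h_lt => ?_)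
  have h := hinj ⟨_, h_lt⟩ ⟨0, hn⟩ (iterate_minimalPeriod (f := f) (x := x))
  exact (hx.minimalPeriod_pos hn).ne' (Fin.mk.inj_iff.1 h)

lemma Function.iterate_apply_iterate_eq_iff (hx : x ∈ periodicPts f) (d r : ℕ) :
    f^[d] (f^[r] x) = f^[r] x ↔ minimalPeriod f x ∣ d := by
  rw [← minimalPeriod_apply_iterate hx r]
  exact isPeriodicPt_iff_minimalPeriod_dvd

end Dynamics

section CyclicSieving

variable {A : Type*} {n : ℕ}

lemma filter_nonconst_eq_image_iterate_cshift [DecidableEq A] {X : Finset (Fin n → A)}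
    (hX : ∀ v ∈ X, cshift v ∈ X) {w : Fin n → A} (hw : w ∈ X) (hnc : ∃ i j, w i ≠ w j)
    (hmin : minimalPeriod cshift w = n)
    (horb : ∀ v ∈ X, (∃ i j, v i ≠ v j) → ∃ r : ℕ, v = cshift^[r] w) :
    X.filter (fun v => ∃ i j, v i ≠ v j) = (range n).image (cshift^[·] w) := by
  obtain ⟨i₀, j₀, h_ne⟩ := hnc
  have hn : 0 < n := i₀.pos
  have hw_per : w ∈ periodicPts cshift := minimalPeriod_pos_iff_mem_periodicPts.1 (by rwa [hmin])
  ext v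
  simp only [mem_filter, mem_image, mem_range]
  constructor
  · rintro ⟨hv, hv_nc⟩
    obtain ⟨r, rfl⟩ := horb v hv hv_nc
    refine ⟨r % n, Nat.mod_lt _ hn, ?_⟩
    have h_mod := iterate_mod_minimalPeriod_eq (f := cshift) (x := w) (n := r)
    rwa [hmin] at h_mod
  · rintro ⟨r, -, rfl⟩
    refine ⟨?_, ?_⟩
    · induction r with
      | zero => exact hw
      | succ r ih => rw [iterate_succ_apply']; exact hX _ ih
    · by_contra! h_const
      have h_one := minimalPeriod_eq_one_iff_isFixedPt.2 (cshift_eq_self_of_const h_const)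
      rw [minimalPeriod_apply_iterate hw_per, hmin] at h_one
      subst h_one
      exact h_ne (congrArg w (Subsingleton.elim i₀ j₀))

lemma exhibitsCSP_iff_sum_filter_nonconst [DecidableEq A] (X : Finset (Fin n → A))
    (stat : (Fin n → A) → ℕ)
    (hstat : ∀ v : Fin n → A, (∀ i j, v i = v j) → stat v = 0) :
    exhibitsCSP X stat ↔ ∀ d : ℕ,
      ∑ v ∈ X with ∃ i j, v i ≠ v j, (if cshift^[d] v = v then 1 else 0 : ℂ) =
        ∑ v ∈ X with ∃ i j, v i ≠ v j,
          Complex.exp (2 * (Real.pi : ℂ) * Complex.I / n) ^ (d * stat v) := by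
  refine forall_congr' fun d => ?_
  have h_const : ∑ v ∈ X with ¬∃ i j, v i ≠ v j, (if cshift^[d] v = v then 1 else 0 : ℂ) =
      ∑ v ∈ X with ¬∃ i j, v i ≠ v j,
        Complex.exp (2 * (Real.pi : ℂ) * Complex.I / n) ^ (d * stat v) := by
    refine sum_congr rfl fun v hv => ?_
    have hv_const : ∀ i j, v i = v j := by simpa using (mem_filter.1 hv).2
    rw [iterate_fixed (cshift_eq_self_of_const hv_const), hstat v hv_const, if_pos rfl, mul_zero,
      pow_zero]
  rw [card_filter, Nat.cast_sum]
  push_cast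
  rw [← sum_filter_add_sum_filter_not X (fun v => ∃ i j, v i ≠ v j),
    ← sum_filter_add_sum_filter_not X (fun v => ∃ i j, v i ≠ v j), h_const, add_left_inj]

end CyclicSieving

/-- if a shift-stable set of binary words X ⊆ {0,1}^n has all its
non-constant words lying in a single free C-orbit, represented by the word w, then
(X, X^inv(t), C) exhibits the CSP if and only if gcd(n, wt w) = 1. -/
theorem stmt10 {n : ℕ} (hn : 1 ≤ n)
    (X : Finset (Fin n → Bool)) (hX : ∀ v ∈ X, cshift v ∈ X)
    (w : Fin n → Bool) (hw : w ∈ X) (hnc : ∃ i j, w i ≠ w j)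
    (hfree : ∀ i j : Fin n, cshift^[(i : ℕ)] w = cshift^[(j : ℕ)] w → i = j)
    (horb : ∀ v ∈ X, (∃ i j, v i ≠ v j) → ∃ r : ℕ, v = cshift^[r] w) :
    exhibitsCSP X invNum ↔ Nat.gcd n (wt w) = 1 := by
  have hζ := Complex.isPrimitiveRoot_exp n (by omega)
  have hmin : minimalPeriod cshift w = n :=
    minimalPeriod_eq_of_injective_iterate hn (cshift_iterate_length w) hfree
  have hw_per : w ∈ periodicPts cshift := minimalPeriod_pos_iff_mem_periodicPts.1 (by omega)
  have h_inj : Set.InjOn (cshift^[·] w) (range n) := by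
    have h := iterate_injOn_Iio_minimalPeriod (f := cshift) (x := w)
    rwa [hmin, ← coe_range] at h
  rw [exhibitsCSP_iff_sum_filter_nonconst X invNum fun _ => invNum_eq_zero_of_const,
    filter_nonconst_eq_image_iterate_cshift hX hw hnc hmin horb,
    ← Nat.coprime_iff_gcd_eq_one, ← hζ.forall_ite_dvd_eq_iff_coprime hn (invNum w) (wt w)]
  refine forall_congr' fun d => ?_
  rw [sum_image h_inj, sum_image h_inj, hζ.sum_range_pow_invNum_cshift_iterate]
  simp only [iterate_apply_iterate_eq_iff hw_per, hmin, sum_const, card_range, nsmul_eq_mul,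
    mul_ite, mul_one, mul_zero]
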